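/- arXiv:2006.11430 — 2 statements merged into one kernel-verified Lean document; each statement's English description precedes it below -/
import Mathlib

section
/- From the regret bounds of both players in a repeated zero-sum game one obtains: inf_a (1/T) Σ_t R(a, b_t) ≥ sup_b (1/T) Σ_t R(a_t, b) − (ε₁+ε₂)/T. In particular, sup_b (1/T) Σ_t R(a_t, b) ≤ inf_a sup_b R(a, b) + (ε₁+ε₂)/T, i.e., the uniform mixture of the minimization player's iterates is an approximately minimax strategy. -/
open Finset

/-- From the regret bounds of both players in a repeated zero-sum game:
`inf_a (1/T) Σ_t R a (b t) ≥ sup_b (1/T) Σ_t R (a t) b − (ε₁+ε₂)/T`, and in particular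
the uniform mixture of the minimization player's iterates is approximately minimax:
`sup_b (1/T) Σ_t R (a t) b ≤ inf_a sup_b R a b + (ε₁+ε₂)/T`. -/
theorem regret_bounds_give_approx_minimax {A B : Type*} [Nonempty A] [Nonempty B]
    (R : A → B → ℝ) (hbdd : ∃ C : ℝ, ∀ a b, |R a b| ≤ C)
    (T : ℕ) (hT : 0 < T) (a : Fin T → A) (b : Fin T → B)
    (ε₁ ε₂ : ℝ) (hε₁ : 0 ≤ ε₁) (hε₂ : 0 ≤ ε₂)
    (hreg₁ : (∑ t, R (a t) (b t)) - (⨅ a' : A, ∑ t, R a' (b t)) ≤ ε₁)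
    (hreg₂ : (⨆ b' : B, ∑ t, R (a t) b') - (∑ t, R (a t) (b t)) ≤ ε₂) :
    ((⨆ b' : B, (T : ℝ)⁻¹ * ∑ t, R (a t) b') - (ε₁ + ε₂) / T ≤
        ⨅ a' : A, (T : ℝ)⁻¹ * ∑ t, R a' (b t)) ∧
      (⨆ b' : B, (T : ℝ)⁻¹ * ∑ t, R (a t) b') ≤
        (⨅ a' : A, ⨆ b' : B, R a' b') + (ε₁ + ε₂) / T := by
  obtain ⟨C, hC⟩ := hbdd
  have hTpos : (0:ℝ) < T := by exact_mod_cast hT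
  have hTinv : (0:ℝ) ≤ (T : ℝ)⁻¹ := by positivity
  -- boundedness facts
  have hbddS : BddAbove (Set.range fun b' : B => ∑ t, R (a t) b') := by
    refine ⟨T * C, ?_⟩
    rintro x ⟨b', rfl⟩
    calc ∑ t, R (a t) b' ≤ ∑ t : Fin T, C :=
          Finset.sum_le_sum fun t _ => (abs_le.mp (hC _ _)).2
      _ = T * C := by simp [mul_comm]
  have hbddI : BddBelow (Set.range fun a' : A => ∑ t, R a' (b t)) := by
    refine ⟨-(T * C), ?_⟩
    rintro x ⟨a', rfl⟩
    calc -(T * C) = ∑ t : Fin T, (-C) := by simp [mul_comm]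
      _ ≤ ∑ t, R a' (b t) := Finset.sum_le_sum fun t _ => (abs_le.mp (hC _ _)).1
  have hbddR : ∀ a' : A, BddAbove (Set.range fun b' : B => R a' b') := by
    intro a'
    exact ⟨C, by rintro x ⟨b', rfl⟩; exact (abs_le.mp (hC _ _)).2⟩
  -- key inequality on sums
  have key : (⨆ b' : B, ∑ t, R (a t) b') - (ε₁ + ε₂) ≤ ⨅ a' : A, ∑ t, R a' (b t) := by
    linarith
  -- rewrite scaled sup/inf
  have hSup : (⨆ b' : B, (T : ℝ)⁻¹ * ∑ t, R (a t) b')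
      = (T : ℝ)⁻¹ * ⨆ b' : B, ∑ t, R (a t) b' :=
    (Real.mul_iSup_of_nonneg hTinv _).symm
  have hInf : (⨅ a' : A, (T : ℝ)⁻¹ * ∑ t, R a' (b t))
      = (T : ℝ)⁻¹ * ⨅ a' : A, ∑ t, R a' (b t) :=
    (Real.mul_iInf_of_nonneg hTinv _).symm
  have part1 : (⨆ b' : B, (T : ℝ)⁻¹ * ∑ t, R (a t) b') - (ε₁ + ε₂) / T ≤
      ⨅ a' : A, (T : ℝ)⁻¹ * ∑ t, R a' (b t) := by
    rw [hSup, hInf, div_eq_inv_mul, ← mul_sub]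
    exact mul_le_mul_of_nonneg_left key hTinv
  refine ⟨part1, ?_⟩
  -- part 2
  have h2 : (⨅ a' : A, (T : ℝ)⁻¹ * ∑ t, R a' (b t)) ≤ ⨅ a' : A, ⨆ b' : B, R a' b' := by
    refine le_ciInf fun a' => ?_
    refine le_trans (ciInf_le ?_ a') ?_
    · obtain ⟨c, hc⟩ := hbddI
      refine ⟨(T:ℝ)⁻¹ * c, ?_⟩
      rintro x ⟨a'', rfl⟩
      exact mul_le_mul_of_nonneg_left (hc ⟨a'', rfl⟩) hTinv
    · have : ∑ t, R a' (b t) ≤ ∑ t : Fin T, ⨆ b' : B, R a' b' :=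
        Finset.sum_le_sum fun t _ => le_ciSup (hbddR a') (b t)
      calc (T : ℝ)⁻¹ * ∑ t, R a' (b t) ≤ (T : ℝ)⁻¹ * ∑ t : Fin T, ⨆ b' : B, R a' b' :=
            mul_le_mul_of_nonneg_left this hTinv
        _ = ⨆ b' : B, R a' b' := by
            rw [Finset.sum_const, Finset.card_univ, Fintype.card_fin, nsmul_eq_mul]
            field_simp
  linarith
end

section
/- (Lipschitz continuity of the Gaussian sequence risk.) Let Θ = {θ ∈ ℝ^d : ‖θ‖₂ ≤ B} and let θ̂ : ℝ^d → Θ be any measurable estimator. Then the risk R(θ̂, θ) = E_{X~N(θ,I)}[‖θ̂(X) − θ‖₂²] is Lipschitz continuous in θ over Θ with respect to the ℓ₂ norm, with Lipschitz constant at most 4(B + √d·B²). -/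
/-!
Both risks are integrals against the product densities `p_θ` of `N(θ, I)`, and
`R(θ₁) - R(θ₂) = ∫ (p_θ₁ - p_θ₂) ℓ₁ + ∫ p_θ₂ (ℓ₁ - ℓ₂)` for the losses `ℓᵢ x = ‖est x - θᵢ‖²`,
where `|ℓ₁| ≤ 4B²` and `|ℓ₁ - ℓ₂| ≤ 4B ‖θ₁ - θ₂‖`. It remains to bound the `L¹` distance
`∫ |p_θ₁ - p_θ₂|` by `‖θ₁ - θ₂‖`: writing `|p - q| = |√p - √q| (√p + √q)` and applying AM-GM
reduces it to the Bhattacharyya coefficient `∫ √(p_θ₁ p_θ₂) = exp (-‖θ₁ - θ₂‖² / 8)`.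
-/

open MeasureTheory

/-- The Gaussian measure `N(θ, I_d)` on `ℝ^d`. -/
noncomputable def gaussianSeq (d : ℕ) (θ : EuclideanSpace ℝ (Fin d)) :
    Measure (EuclideanSpace ℝ (Fin d)) :=
  (Measure.pi fun _ : Fin d => ProbabilityTheory.gaussianReal 0 1).map
    (fun x => θ + (WithLp.equiv 2 (Fin d → ℝ)).symm x)

open ProbabilityTheory
open scoped ENNReal

namespace MeasureTheory

theorem lintegral_fin_nat_prod_eq_prod {n : ℕ} {E : Fin n → Type*}
    {mE : ∀ i, MeasurableSpace (E i)} (μ : (i : Fin n) → Measure (E i)) [∀ i, SigmaFinite (μ i)]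
    {f : (i : Fin n) → E i → ℝ≥0∞} (hf : ∀ i, Measurable (f i)) :
    ∫⁻ x : (i : Fin n) → E i, ∏ i, f i (x i) ∂(Measure.pi μ) = ∏ i, ∫⁻ x, f i x ∂(μ i) := by
  induction n with
  | zero => simp
  | succ n ih =>
    rw [← ((measurePreserving_piFinSuccAbove μ 0).symm).lintegral_comp_emb
      (MeasurableEquiv.measurableEmbedding _)]
    simp_rw [MeasurableEquiv.piFinSuccAbove_symm_apply, Fin.insertNthEquiv,
      Fin.prod_univ_succ, Fin.insertNth_zero, Equiv.coe_fn_mk, Fin.cons_zero, Fin.cons_succ]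
    have htail : Measurable fun x : (j : Fin n) → E j.succ ↦ ∏ j, f j.succ (x j) :=
      Finset.measurable_prod _ fun j _ ↦ (hf j.succ).comp (measurable_pi_apply j)
    exact (lintegral_prod_mul (hf 0).aemeasurable
      (htail.aemeasurable (μ := .pi fun j ↦ μ j.succ))).trans
      (by rw [ih (fun i ↦ μ i.succ) fun i ↦ hf i.succ])

theorem lintegral_fintype_prod_eq_prod {ι : Type*} [Fintype ι] {E : ι → Type*}
    {mE : ∀ i, MeasurableSpace (E i)} (μ : (i : ι) → Measure (E i)) [∀ i, SigmaFinite (μ i)]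
    {f : (i : ι) → E i → ℝ≥0∞} (hf : ∀ i, Measurable (f i)) :
    ∫⁻ x : (i : ι) → E i, ∏ i, f i (x i) ∂(Measure.pi μ) = ∏ i, ∫⁻ x, f i x ∂(μ i) := by
  let e := (Fintype.equivFin ι).symm
  rw [← (measurePreserving_piCongrLeft _ e).lintegral_comp_emb
    (MeasurableEquiv.measurableEmbedding _)]
  simp_rw [← e.prod_comp, MeasurableEquiv.coe_piCongrLeft, Equiv.piCongrLeft_apply_apply]
  exact lintegral_fin_nat_prod_eq_prod _ fun i ↦ hf (e i)

theorem Measure.pi_withDensity {ι : Type*} [Fintype ι] {E : ι → Type*}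
    {mE : ∀ i, MeasurableSpace (E i)} {μ : (i : ι) → Measure (E i)} [∀ i, SigmaFinite (μ i)]
    {f : (i : ι) → E i → ℝ≥0∞} (hf : ∀ i, Measurable (f i))
    (hf_ne_top : ∀ i, ∀ᵐ x ∂μ i, f i x ≠ ∞) :
    Measure.pi (fun i ↦ (μ i).withDensity (f i))
      = (Measure.pi μ).withDensity (fun x ↦ ∏ i, f i (x i)) := by
  have (i : ι) := SigmaFinite.withDensity_of_ne_top (hf_ne_top i)
  refine Measure.pi_eq fun s hs ↦ ?_
  have hbox : (Set.univ.pi s).indicator (fun x ↦ ∏ i, f i (x i))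
      = fun x ↦ ∏ i, (s i).indicator (f i) (x i) := by
    ext x
    by_cases h : x ∈ Set.univ.pi s
    · rw [Set.indicator_of_mem h]
      exact Finset.prod_congr rfl fun i _ ↦ (Set.indicator_of_mem (h i trivial) _).symm
    · obtain ⟨i, hi⟩ : ∃ i, x i ∉ s i := by simpa [Set.mem_pi] using h
      rw [Set.indicator_of_notMem h]
      exact (Finset.prod_eq_zero (Finset.mem_univ i) (Set.indicator_of_notMem hi _)).symm
  rw [withDensity_apply _ (.univ_pi hs), ← lintegral_indicator (.univ_pi hs), hbox,
    lintegral_fintype_prod_eq_prod _ fun i ↦ (hf i).indicator (hs i)]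
  exact Finset.prod_congr rfl fun i _ ↦ by
    rw [lintegral_indicator (hs i), withDensity_apply _ (hs i)]

end MeasureTheory

lemma abs_sub_le_of_sqrt_mul {u v c : ℝ} (hu : 0 ≤ u) (hv : 0 ≤ v) (hc : 0 < c) :
    |u - v| ≤ (u + v - 2 * √(u * v)) / (2 * c) + c * (u + v + 2 * √(u * v)) / 2 := by
  obtain ⟨a, ha, rfl⟩ : ∃ a, 0 ≤ a ∧ u = a ^ 2 := ⟨√u, Real.sqrt_nonneg u, (Real.sq_sqrt hu).symm⟩
  obtain ⟨b, hb, rfl⟩ : ∃ b, 0 ≤ b ∧ v = b ^ 2 := ⟨√v, Real.sqrt_nonneg v, (Real.sq_sqrt hv).symm⟩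
  have hab : |a ^ 2 - b ^ 2| = |a - b| * (a + b) := by
    rw [sq_sub_sq, abs_mul, abs_of_nonneg (add_nonneg ha hb), mul_comm]
  rw [← mul_pow, Real.sqrt_sq (mul_nonneg ha hb), hab]
  -- AM-GM: `2 c |a - b| (a + b) ≤ (a - b)² + c² (a + b)²`
  rw [div_add_div _ _ (by positivity) two_ne_zero, le_div_iff₀ (by positivity)]
  nlinarith [sq_nonneg (|a - b| - c * (a + b)), sq_abs (a - b)]

section Integral

variable {α : Type*} [MeasurableSpace α] {μ : Measure α}

lemma integral_abs_sub_le_of_integral_eq_one {p q : α → ℝ} (hp : Integrable p μ)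
    (hq : Integrable q μ) (hp0 : 0 ≤ p) (hq0 : 0 ≤ q) (hp1 : ∫ x, p x ∂μ = 1)
    (hq1 : ∫ x, q x ∂μ = 1) {c : ℝ} (hc : 0 < c) :
    ∫ x, |p x - q x| ∂μ
      ≤ (1 - ∫ x, √(p x * q x) ∂μ) / c + c * (1 + ∫ x, √(p x * q x) ∂μ) := by
  have hsqrt : Integrable (fun x ↦ √(p x * q x)) μ := by
    refine (hp.add hq).mono' (Real.continuous_sqrt.comp_aestronglyMeasurable (hp.1.mul hq.1))
      (ae_of_all _ fun x ↦ ?_)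
    rw [Real.norm_of_nonneg (Real.sqrt_nonneg _), Real.sqrt_mul (hp0 x), Pi.add_apply]
    nlinarith [Real.sq_sqrt (hp0 x), Real.sq_sqrt (hq0 x), sq_nonneg (√(p x) - √(q x)), hp0 x,
      hq0 x]
  have hsum : Integrable (fun x ↦ (1 / (2 * c) + c / 2) * (p x + q x)) μ :=
    (hp.add hq).const_mul _
  have hbound : Integrable (fun x ↦
      (1 / (2 * c) + c / 2) * (p x + q x) + (c - 1 / c) * √(p x * q x)) μ :=
    hsum.add (hsqrt.const_mul _)
  calc ∫ x, |p x - q x| ∂μ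
      ≤ ∫ x, (1 / (2 * c) + c / 2) * (p x + q x) + (c - 1 / c) * √(p x * q x) ∂μ := by
        refine integral_mono (hp.sub hq).abs hbound fun x ↦
          (abs_sub_le_of_sqrt_mul (hp0 x) (hq0 x) hc).trans_eq ?_
        field_simp
        ring
    _ = (1 - ∫ x, √(p x * q x) ∂μ) / c + c * (1 + ∫ x, √(p x * q x) ∂μ) := by
        rw [integral_add hsum (hsqrt.const_mul _), integral_const_mul,
          integral_const_mul, integral_add hp hq, hp1, hq1]
        field_simp
        ring

lemma abs_integral_mul_le {p f : α → ℝ} {C : ℝ} (hp : Integrable p μ) (hf : ∀ x, |f x| ≤ C) :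
    |∫ x, p x * f x ∂μ| ≤ C * ∫ x, |p x| ∂μ := by
  rw [← Real.norm_eq_abs, ← integral_const_mul]
  refine norm_integral_le_of_norm_le (hp.abs.const_mul C) (ae_of_all _ fun x ↦ ?_)
  rw [Real.norm_eq_abs, abs_mul, mul_comm]
  exact mul_le_mul_of_nonneg_right (hf x) (abs_nonneg _)

lemma abs_integral_mul_sub_integral_mul_le {p q f g : α → ℝ} {C D : ℝ} (hp : Integrable p μ)
    (hq : Integrable q μ) (hq0 : 0 ≤ q) (hf : AEStronglyMeasurable f μ)
    (hg : AEStronglyMeasurable g μ) (hfC : ∀ x, |f x| ≤ C) (hfgD : ∀ x, |f x - g x| ≤ D) :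
    |∫ x, p x * f x ∂μ - ∫ x, q x * g x ∂μ|
      ≤ C * ∫ x, |p x - q x| ∂μ + D * ∫ x, q x ∂μ := by
  have hgCD : ∀ x, ‖g x‖ ≤ C + D := fun x ↦ by
    have := abs_sub_abs_le_abs_sub (g x) (f x)
    rw [abs_sub_comm] at this
    rw [Real.norm_eq_abs]; linarith [hfC x, hfgD x]
  have hpf := hp.mul_bdd hf (ae_of_all _ hfC)
  have hqf := hq.mul_bdd hf (ae_of_all _ hfC)
  have hqg := hq.mul_bdd hg (ae_of_all _ hgCD)
  have hsplit : ∫ x, p x * f x ∂μ - ∫ x, q x * g x ∂μ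
      = ∫ x, (p x - q x) * f x ∂μ + ∫ x, q x * (f x - g x) ∂μ := by
    simp_rw [sub_mul, mul_sub]
    rw [integral_sub hpf hqf, integral_sub hqf hqg]
    ring
  have hqabs : ∫ x, |q x| ∂μ = ∫ x, q x ∂μ := by simp_rw [abs_of_nonneg (hq0 _)]
  rw [hsplit, ← hqabs]
  exact (abs_add_le _ _).trans
    (add_le_add (abs_integral_mul_le (hp.sub hq) hfC) (abs_integral_mul_le hq hfgD))

end Integral

lemma abs_norm_sq_sub_norm_sq_le {E : Type*} [SeminormedAddCommGroup E] (u v : E) :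
    |‖u‖ ^ 2 - ‖v‖ ^ 2| ≤ ‖u - v‖ * (‖u‖ + ‖v‖) := by
  rw [sq_sub_sq, abs_mul, abs_of_nonneg (by positivity), mul_comm]
  exact mul_le_mul_of_nonneg_right (abs_norm_sub_norm_le u v) (by positivity)

lemma pi_gaussianReal_eq_withDensity {ι : Type*} [Fintype ι] (m : ι → ℝ) {v : NNReal}
    (hv : v ≠ 0) :
    Measure.pi (fun i ↦ gaussianReal (m i) v)
      = volume.withDensity (fun y ↦ ∏ i, gaussianPDF (m i) v (y i)) := by
  simp_rw [gaussianReal_of_var_ne_zero _ hv]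
  rw [Measure.pi_withDensity (fun i ↦ measurable_gaussianPDF _ _)
    fun i ↦ ae_of_all _ fun _ ↦ gaussianPDF_ne_top, volume_pi]

lemma gaussianPDFReal_one_mul_gaussianPDFReal_one (a b y : ℝ) :
    gaussianPDFReal a 1 y * gaussianPDFReal b 1 y
      = (Real.exp (-(a - b) ^ 2 / 8) * gaussianPDFReal ((a + b) / 2) 1 y) ^ 2 := by
  simp only [gaussianPDFReal, NNReal.coe_one, mul_one]
  rw [mul_pow, mul_pow, ← Real.exp_nat_mul, ← Real.exp_nat_mul]
  calc _ = ((√(2 * Real.pi))⁻¹) ^ 2 * Real.exp (-(y - a) ^ 2 / 2 + -(y - b) ^ 2 / 2) := by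
        rw [Real.exp_add]; ring
    _ = _ := by
        rw [mul_left_comm, ← Real.exp_add]
        congr 2
        push_cast
        ring

lemma gaussianSeq_eq_map_pi (d : ℕ) (θ : EuclideanSpace ℝ (Fin d)) :
    gaussianSeq d θ = (Measure.pi fun i ↦ gaussianReal (θ i) 1).map (WithLp.toLp 2) := by
  have hshift : (Measure.pi fun _ : Fin d ↦ gaussianReal 0 1).map (fun y i ↦ θ i + y i)
      = Measure.pi fun i ↦ gaussianReal (θ i) 1 := by
    rw [Measure.pi_map_pi fun i ↦ (measurable_const_add (θ i)).aemeasurable]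
    simp_rw [gaussianReal_map_const_add, zero_add]
  rw [← hshift, Measure.map_map (WithLp.measurable_toLp 2 _) (by fun_prop)]
  rfl

noncomputable def gaussianSeqPDF (d : ℕ) (θ x : EuclideanSpace ℝ (Fin d)) : ℝ :=
  ∏ i, gaussianPDFReal (θ i) 1 (x i)

lemma integral_gaussianSeq (d : ℕ) (θ : EuclideanSpace ℝ (Fin d))
    (f : EuclideanSpace ℝ (Fin d) → ℝ) :
    ∫ x, f x ∂gaussianSeq d θ = ∫ x, gaussianSeqPDF d θ x * f x := by
  rw [gaussianSeq_eq_map_pi, ← MeasurableEquiv.coe_toLp,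
    (MeasurableEquiv.toLp 2 (Fin d → ℝ)).measurableEmbedding.integral_map,
    pi_gaussianReal_eq_withDensity _ one_ne_zero,
    integral_withDensity_eq_integral_toReal_smul (by fun_prop)
      (ae_of_all _ fun _ ↦ ENNReal.prod_lt_top fun _ _ ↦ gaussianPDF_lt_top),
    ← (PiLp.volume_preserving_toLp (Fin d)).integral_comp
      (MeasurableEquiv.toLp 2 (Fin d → ℝ)).measurableEmbedding]
  simp [gaussianSeqPDF, ENNReal.toReal_prod]

lemma gaussianSeqPDF_nonneg (d : ℕ) (θ x : EuclideanSpace ℝ (Fin d)) :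
    0 ≤ gaussianSeqPDF d θ x :=
  Finset.prod_nonneg fun _ _ ↦ gaussianPDFReal_nonneg _ _ _

lemma integrable_gaussianSeqPDF (d : ℕ) (θ : EuclideanSpace ℝ (Fin d)) :
    Integrable (gaussianSeqPDF d θ) := by
  rw [← (PiLp.volume_preserving_toLp (Fin d)).integrable_comp_emb
    (MeasurableEquiv.toLp 2 (Fin d → ℝ)).measurableEmbedding, volume_pi]
  exact Integrable.fintype_prod fun i ↦ integrable_gaussianPDFReal (θ i) 1

instance isProbabilityMeasure_gaussianSeq (d : ℕ) (θ : EuclideanSpace ℝ (Fin d)) :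
    IsProbabilityMeasure (gaussianSeq d θ) :=
  Measure.isProbabilityMeasure_map
    (measurable_const.add (WithLp.measurable_toLp 2 _)).aemeasurable

lemma integral_gaussianSeqPDF (d : ℕ) (θ : EuclideanSpace ℝ (Fin d)) :
    ∫ x, gaussianSeqPDF d θ x = 1 := by
  simpa using (integral_gaussianSeq d θ fun _ ↦ 1).symm

lemma gaussianSeqPDF_mul (d : ℕ) (a b x : EuclideanSpace ℝ (Fin d)) :
    gaussianSeqPDF d a x * gaussianSeqPDF d b x
      = (Real.exp (-‖a - b‖ ^ 2 / 8) * gaussianSeqPDF d ((2 : ℝ)⁻¹ • (a + b)) x) ^ 2 := by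
  simp only [gaussianSeqPDF, ← Finset.prod_mul_distrib,
    gaussianPDFReal_one_mul_gaussianPDFReal_one, EuclideanSpace.norm_sq_eq, Real.norm_eq_abs,
    sq_abs, mul_pow, ← Finset.prod_pow,
    PiLp.smul_apply, PiLp.add_apply, PiLp.sub_apply, smul_eq_mul, inv_mul_eq_div]
  rw [Finset.prod_mul_distrib, Finset.prod_pow, Finset.prod_pow, ← Real.exp_sum, neg_div,
    Finset.sum_div, ← Finset.sum_neg_distrib]
  simp_rw [neg_div]

lemma integral_sqrt_gaussianSeqPDF_mul (d : ℕ) (a b : EuclideanSpace ℝ (Fin d)) :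
    ∫ x, √(gaussianSeqPDF d a x * gaussianSeqPDF d b x) = Real.exp (-‖a - b‖ ^ 2 / 8) := by
  simp_rw [gaussianSeqPDF_mul, Real.sqrt_sq (mul_nonneg (Real.exp_nonneg _)
    (gaussianSeqPDF_nonneg _ _ _))]
  rw [integral_const_mul, integral_gaussianSeqPDF, mul_one]

lemma integral_abs_gaussianSeqPDF_sub_le (d : ℕ) (a b : EuclideanSpace ℝ (Fin d)) :
    ∫ x, |gaussianSeqPDF d a x - gaussianSeqPDF d b x| ≤ ‖a - b‖ := by
  rcases eq_or_ne a b with rfl | hab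
  · simp
  set t := ‖a - b‖
  have ht : 0 < t := norm_pos_iff.mpr (sub_ne_zero.mpr hab)
  have hρ_le_one : Real.exp (-t ^ 2 / 8) ≤ 1 := Real.exp_le_one_iff.mpr (by nlinarith)
  have hρ_ge : 1 - t ^ 2 / 8 ≤ Real.exp (-t ^ 2 / 8) := by
    linarith [Real.add_one_le_exp (-t ^ 2 / 8)]
  refine (integral_abs_sub_le_of_integral_eq_one (integrable_gaussianSeqPDF d a)
    (integrable_gaussianSeqPDF d b) (gaussianSeqPDF_nonneg d a) (gaussianSeqPDF_nonneg d b)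
    (integral_gaussianSeqPDF d a) (integral_gaussianSeqPDF d b) (c := t / 4)
    (by positivity)).trans ?_
  rw [integral_sqrt_gaussianSeqPDF_mul]
  -- with `c = t / 4`, both terms are at most `t / 2`
  have h1 : (1 - Real.exp (-t ^ 2 / 8)) / (t / 4) ≤ t / 2 := by
    rw [div_le_iff₀ (by positivity)]; nlinarith
  nlinarith

theorem gaussian_sequence_risk_lipschitz_general (d : ℕ) (hd : 1 ≤ d) (B : ℝ)
    (est : EuclideanSpace ℝ (Fin d) → EuclideanSpace ℝ (Fin d))
    (hmeas : Measurable est) (hval : ∀ x, ‖est x‖ ≤ B)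
    (θ₁ θ₂ : EuclideanSpace ℝ (Fin d)) (h₁ : ‖θ₁‖ ≤ B) (h₂ : ‖θ₂‖ ≤ B) :
    |(∫ x, ‖est x - θ₁‖ ^ 2 ∂(gaussianSeq d θ₁)) -
        ∫ x, ‖est x - θ₂‖ ^ 2 ∂(gaussianSeq d θ₂)| ≤
      4 * (B + Real.sqrt d * B ^ 2) * ‖θ₁ - θ₂‖ := by
  have hdist : ∀ x {θ : EuclideanSpace ℝ (Fin d)}, ‖θ‖ ≤ B → ‖est x - θ‖ ≤ 2 * B := fun x θ hθ ↦
    (norm_sub_le _ _).trans (by linarith [hval x])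
  have hloss : ∀ x, |‖est x - θ₁‖ ^ 2| ≤ 4 * B ^ 2 := fun x ↦ by
    rw [abs_of_nonneg (by positivity)]
    nlinarith [hdist x h₁, norm_nonneg (est x - θ₁)]
  have hloss_sub : ∀ x, |‖est x - θ₁‖ ^ 2 - ‖est x - θ₂‖ ^ 2| ≤ 4 * B * ‖θ₁ - θ₂‖ := fun x ↦ by
    refine (abs_norm_sq_sub_norm_sq_le _ _).trans ?_
    rw [sub_sub_sub_cancel_left, norm_sub_rev]
    nlinarith [hdist x h₁, hdist x h₂, norm_nonneg (θ₁ - θ₂)]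
  have hsqrt_d : 1 ≤ Real.sqrt d := Real.one_le_sqrt.mpr (by exact_mod_cast hd)
  rw [integral_gaussianSeq, integral_gaussianSeq]
  calc _ ≤ 4 * B ^ 2 * (∫ x, |gaussianSeqPDF d θ₁ x - gaussianSeqPDF d θ₂ x|)
        + 4 * B * ‖θ₁ - θ₂‖ * ∫ x, gaussianSeqPDF d θ₂ x :=
        abs_integral_mul_sub_integral_mul_le (integrable_gaussianSeqPDF d θ₁)
          (integrable_gaussianSeqPDF d θ₂) (gaussianSeqPDF_nonneg d θ₂) (by fun_prop)
          (by fun_prop) hloss hloss_sub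
    _ ≤ 4 * B ^ 2 * ‖θ₁ - θ₂‖ + 4 * B * ‖θ₁ - θ₂‖ := by
        rw [integral_gaussianSeqPDF, mul_one]
        gcongr
        exact integral_abs_gaussianSeqPDF_sub_le d θ₁ θ₂
    _ ≤ 4 * (B + Real.sqrt d * B ^ 2) * ‖θ₁ - θ₂‖ := by
        nlinarith [mul_nonneg (mul_nonneg (sub_nonneg.2 hsqrt_d) (sq_nonneg B))
          (norm_nonneg (θ₁ - θ₂))]

/-- (Lipschitz continuity of the Gaussian sequence risk.) For any measurable estimator
`est` taking values in the ball of radius `B`, the risk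
`R(est, θ) = E_{X ~ N(θ, I)}[‖est X − θ‖²]` is Lipschitz in `θ` over the ball
`{‖θ‖ ≤ B}` with constant `4(B + √d B²)`. -/
theorem gaussian_sequence_risk_lipschitz (d : ℕ) (hd : 1 ≤ d) (B : ℝ) (hB : 0 < B)
    (est : EuclideanSpace ℝ (Fin d) → EuclideanSpace ℝ (Fin d))
    (hmeas : Measurable est) (hval : ∀ x, ‖est x‖ ≤ B)
    (θ₁ θ₂ : EuclideanSpace ℝ (Fin d)) (h₁ : ‖θ₁‖ ≤ B) (h₂ : ‖θ₂‖ ≤ B) :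
    |(∫ x, ‖est x - θ₁‖ ^ 2 ∂(gaussianSeq d θ₁)) -
        ∫ x, ‖est x - θ₂‖ ^ 2 ∂(gaussianSeq d θ₂)| ≤
      4 * (B + Real.sqrt d * B ^ 2) * ‖θ₁ - θ₂‖ :=
  gaussian_sequence_risk_lipschitz_general d hd B est hmeas hval θ₁ θ₂ h₁ h₂
end
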